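/- arXiv:2209.13031 — 2 statements merged into one kernel-verified Lean document; each statement's English description precedes it below -/
import Mathlib

section
/- Let k be a field and R = k[X,Y,Z]/(XY). Then the R-linear map φ : R → R³ defined by φ(r) = (rY, rX, 0) is injective, the R-linear map ψ : R³ → Ω_{R/k} sending the three standard basis vectors to dX, dY, dZ respectively is surjective, and the kernel of ψ equals the image of φ (so 0 → R → R³ → Ω_{R/k} → 0 is exact). In particular, Ω_{R/k} has projective dimension at most 1 as an R-module. -/
open MvPolynomial

set_option synthInstance.maxHeartbeats 1000000
set_option maxHeartbeats 1000000

noncomputable section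

/-- `R = k[X,Y,Z]/(XY)`. -/
abbrev SncLocalRing (k : Type) [Field k] : Type :=
  MvPolynomial (Fin 3) k ⧸
    (Ideal.span {(X 0 : MvPolynomial (Fin 3) k) * X 1})

variable (k : Type) [Field k]

/-- The class of `X` in `R`. -/
def xR : SncLocalRing k := Ideal.Quotient.mk _ (X 0)

/-- The class of `Y` in `R`. -/
def yR : SncLocalRing k := Ideal.Quotient.mk _ (X 1)

/-- The class of `Z` in `R`. -/
def zR : SncLocalRing k := Ideal.Quotient.mk _ (X 2)

/-- `φ : R → R³`, `r ↦ (rY, rX, 0)`. -/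
def phiMap : SncLocalRing k →ₗ[SncLocalRing k] (Fin 3 → SncLocalRing k) :=
  LinearMap.id.smulRight ![yR k, xR k, 0]

/-- `ψ : R³ → Ω_{R/k}` sending the standard basis vectors to `dX, dY, dZ`. -/
def psiMap : (Fin 3 → SncLocalRing k) →ₗ[SncLocalRing k] Ω[SncLocalRing k⁄k] :=
  ∑ i : Fin 3, (LinearMap.proj i).smulRight
    (KaehlerDifferential.D k (SncLocalRing k) (![xR k, yR k, zR k] i))


/-!
For a hypersurface `S = R[X_σ]/(f)`, the map `ψ : S^σ → Ω[S⁄R]`, `eᵢ ↦ dXᵢ`, is onto because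
the `Xᵢ` generate `S`, and its kernel is `S ∙ ∇f`: by the chain rule the derivation
`R[X_σ] → S^σ/(S ∙ ∇f)`, `Xᵢ ↦ eᵢ`, kills `f`, hence the ideal `(f)`, so it descends to `S`
and induces `Ω[S⁄R] → S^σ/(S ∙ ∇f)`, whose composite with `ψ` is the quotient map.
For `f = XY` we have `∇f = (Y, X, 0)`, and `r ↦ r ∇f` is injective because `XY ∣ gY` and
`XY ∣ gX` force `XY ∣ g`, `X` and `Y` being coprime.
-/

open KaehlerDifferential

theorem KaehlerDifferential.span_D_image_eq_top {R S : Type*} [CommRing R] [CommRing S]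
    [Algebra R S] {s : Set S} (hs : Algebra.adjoin R s = ⊤) :
    Submodule.span S (D R S '' s) = ⊤ := by
  rw [eq_top_iff, ← span_range_derivation, Submodule.span_le]
  rintro _ ⟨x, rfl⟩
  induction (hs ▸ Algebra.mem_top : x ∈ Algebra.adjoin R s) using Algebra.adjoin_induction with
  | mem x hx => exact Submodule.subset_span ⟨x, hx, rfl⟩
  | algebraMap r => simp
  | add x y _ _ hx hy => rw [map_add]; exact add_mem hx hy
  | mul x y _ _ hx hy =>
    rw [Derivation.leibniz]
    exact add_mem (Submodule.smul_mem _ _ hy) (Submodule.smul_mem _ _ hx)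

theorem MvPolynomial.derivation_eq_sum_pderiv {R σ M : Type*} [CommSemiring R] [Fintype σ]
    [AddCommMonoid M] [Module R M] [Module (MvPolynomial σ R) M]
    (E : Derivation R (MvPolynomial σ R) M) (g : MvPolynomial σ R) :
    E g = ∑ i, pderiv i g • E (X i) := by
  classical
  induction g using MvPolynomial.induction_on with
  | C a => simp [derivation_C]
  | add p q hp hq => simp [hp, hq, add_smul, Finset.sum_add_distrib]
  | mul_X p j hp =>
    simp [Derivation.leibniz, hp, pderiv_X, add_smul, mul_smul, Finset.sum_add_distrib,
      Finset.smul_sum, Pi.single_apply]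

section QuotientDerivation

variable {R A M : Type*} [CommRing R] [CommRing A] [Algebra R A] {I : Ideal A}
  [AddCommGroup M] [Module R M] [Module A M] [Module (A ⧸ I) M] [IsScalarTower A (A ⧸ I) M]

theorem Derivation.map_mul_eq_zero_of_mem (d : Derivation R A M) {a : A} (ha : a ∈ I)
    (hda : d a = 0) (b : A) : d (b * a) = 0 := by
  rw [d.leibniz, hda, smul_zero, zero_add, ← algebraMap_smul (A ⧸ I),
    Ideal.Quotient.algebraMap_eq, Ideal.Quotient.eq_zero_iff_mem.mpr ha, zero_smul]

def Derivation.liftQuotient (d : Derivation R A M) (hd : ∀ a ∈ I, d a = 0) :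
    Derivation R (A ⧸ I) M where
  toLinearMap := Submodule.liftQ (I.restrictScalars R) d.toLinearMap hd ∘ₗ
    (Submodule.Quotient.restrictScalarsEquiv R I).symm.toLinearMap
  map_one_eq_zero' := d.map_one_eq_zero
  leibniz' a b := by
    obtain ⟨a, rfl⟩ := Ideal.Quotient.mk_surjective a
    obtain ⟨b, rfl⟩ := Ideal.Quotient.mk_surjective b
    rw [← map_mul]
    change d (a * b) = Ideal.Quotient.mk I a • d b + Ideal.Quotient.mk I b • d a
    rw [d.leibniz, ← Ideal.Quotient.algebraMap_eq, algebraMap_smul, algebraMap_smul]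

@[simp]
theorem Derivation.liftQuotient_mk (d : Derivation R A M) (hd : ∀ a ∈ I, d a = 0) (a : A) :
    d.liftQuotient hd (Ideal.Quotient.mk I a) = d a :=
  rfl

end QuotientDerivation

abbrev Hypersurface {R σ : Type*} [CommRing R] (f : MvPolynomial σ R) : Type _ :=
  MvPolynomial σ R ⧸ Ideal.span {f}

namespace Hypersurface

variable {R σ : Type*} [CommRing R] (f : MvPolynomial σ R)

def gradient : σ → Hypersurface f := fun i ↦ Ideal.Quotient.mk _ (pderiv i f)

variable [Fintype σ]

def toKaehler : (σ → Hypersurface f) →ₗ[Hypersurface f] Ω[Hypersurface f⁄R] :=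
  Fintype.linearCombination _ fun i ↦ D R _ (Ideal.Quotient.mk _ (X i))

theorem toKaehler_surjective : Function.Surjective (toKaehler f) := by
  have hgen :
      Algebra.adjoin R (Set.range fun i ↦ Ideal.Quotient.mk (Ideal.span {f}) (X i)) = ⊤ := by
    rw [show (fun i ↦ Ideal.Quotient.mk (Ideal.span {f}) (X i)) =
      Ideal.Quotient.mkₐ R _ ∘ X from rfl, Set.range_comp, Algebra.adjoin_image,
      adjoin_range_X, Algebra.map_top, AlgHom.range_eq_top]
    exact Ideal.Quotient.mkₐ_surjective R _
  rw [← LinearMap.range_eq_top, toKaehler, Fintype.range_linearCombination, Set.range_comp',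
    span_D_image_eq_top hgen]

theorem D_mk_eq_sum_pderiv (g : MvPolynomial σ R) :
    D R (Hypersurface f) (Ideal.Quotient.mk _ g) = ∑ i,
      Ideal.Quotient.mk (Ideal.span {f}) (pderiv i g) • D R _ (Ideal.Quotient.mk _ (X i)) := by
  refine (derivation_eq_sum_pderiv
    ((D R (Hypersurface f)).compAlgebraMap (MvPolynomial σ R)) g).trans ?_
  refine Finset.sum_congr rfl fun i _ ↦ ?_
  rw [← algebraMap_smul (Hypersurface f) (pderiv i g)]
  rfl

theorem toKaehler_gradient : toKaehler f (gradient f) = 0 := by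
  simp only [toKaehler, gradient, Fintype.linearCombination_apply]
  rw [← D_mk_eq_sum_pderiv, Ideal.Quotient.mk_singleton_self, map_zero]

variable [DecidableEq σ]

theorem sum_pderiv_smul_single :
    ∑ i, pderiv i f • (Pi.single i 1 : σ → Hypersurface f) = gradient f := by
  simp only [← Pi.single_smul', ← Algebra.algebraMap_eq_smul_one, Ideal.Quotient.algebraMap_eq]
  exact Finset.univ_sum_single (gradient f)

def cokernelDerivation :
    Derivation R (Hypersurface f) ((σ → Hypersurface f) ⧸ (Hypersurface f ∙ gradient f)) :=
  let δ : Derivation R (MvPolynomial σ R) ((σ → Hypersurface f) ⧸ (Hypersurface f ∙ gradient f)) :=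
    mkDerivation R fun i ↦ Submodule.Quotient.mk (Pi.single i 1)
  δ.liftQuotient <| by
    have hδf : δ f = 0 := by
      rw [derivation_eq_sum_pderiv]
      simp only [δ, mkDerivation_X, ← Submodule.Quotient.mk_smul]
      change ∑ i, (Hypersurface f ∙ gradient f).mkQ (pderiv i f • Pi.single i 1) = 0
      rw [← map_sum, sum_pderiv_smul_single, Submodule.mkQ_apply, Submodule.Quotient.mk_eq_zero]
      exact Submodule.mem_span_singleton_self _
    intro a ha
    obtain ⟨c, rfl⟩ := Ideal.mem_span_singleton'.mp ha
    exact δ.map_mul_eq_zero_of_mem (I := Ideal.span {f}) (Ideal.mem_span_singleton_self f) hδf c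

theorem ker_toKaehler : LinearMap.ker (toKaehler f) = (Hypersurface f ∙ gradient f) := by
  refine le_antisymm (fun a ha ↦ ?_)
    ((Submodule.span_singleton_le_iff_mem _ _).mpr (toKaehler_gradient f))
  have hcomp : (cokernelDerivation f).liftKaehlerDifferential ∘ₗ toKaehler f =
      (Hypersurface f ∙ gradient f).mkQ := by
    refine (Pi.basisFun _ σ).ext fun i ↦ ?_
    rw [Pi.basisFun_apply, LinearMap.comp_apply, toKaehler, Fintype.linearCombination_apply_single,
      one_smul, Derivation.liftKaehlerDifferential_comp_D, cokernelDerivation,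
      Derivation.liftQuotient_mk, mkDerivation_X, Submodule.mkQ_apply]
  rw [← Submodule.Quotient.mk_eq_zero, ← Submodule.mkQ_apply, ← hcomp, LinearMap.comp_apply,
    LinearMap.mem_ker.mp ha, map_zero]

end Hypersurface

theorem Ideal.Quotient.eq_zero_of_mul_mk_eq_zero_of_isRelPrime {A : Type*} [CommRing A]
    [IsDomain A] [DecompositionMonoid A] {p q : A} (hpq : IsRelPrime p q) (hp : p ≠ 0)
    (hq : q ≠ 0) {r : A ⧸ Ideal.span {p * q}} (hrq : r * mk _ q = 0) (hrp : r * mk _ p = 0) :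
    r = 0 := by
  obtain ⟨g, rfl⟩ := mk_surjective r
  rw [← map_mul, eq_zero_iff_dvd] at hrq hrp
  rw [eq_zero_iff_dvd]
  exact hpq.mul_dvd ((mul_dvd_mul_iff_right hq).mp hrq)
    ((mul_dvd_mul_iff_left hp).mp (by rwa [mul_comm p g]))

theorem gradient_X_mul_X :
    Hypersurface.gradient (X 0 * X 1 : MvPolynomial (Fin 3) k) = ![yR k, xR k, 0] := by
  ext i
  fin_cases i <;> simp [Hypersurface.gradient, pderiv_X, xR, yR]

theorem range_phiMap :
    LinearMap.range (phiMap k) =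
      Submodule.span _ {Hypersurface.gradient (X 0 * X 1 : MvPolynomial (Fin 3) k)} := by
  rw [gradient_X_mul_X, LinearMap.span_singleton_eq_range]
  rfl

theorem psiMap_eq_toKaehler :
    psiMap k = Hypersurface.toKaehler (X 0 * X 1 : MvPolynomial (Fin 3) k) := by
  have hv : ![xR k, yR k, zR k] = fun i ↦ Ideal.Quotient.mk _ (X i) := by
    ext i
    fin_cases i <;> rfl
  refine LinearMap.ext fun a ↦ ?_
  simp only [psiMap, hv, LinearMap.sum_apply, LinearMap.smulRight_apply, LinearMap.proj_apply,
    Hypersurface.toKaehler, Fintype.linearCombination_apply]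

theorem phiMap_injective : Function.Injective (phiMap k) := by
  have hXY : IsRelPrime (X 0 : MvPolynomial (Fin 3) k) (X 1) :=
    X_prime.irreducible.isRelPrime_iff_not_dvd.mpr (by rw [X_dvd_X]; decide)
  rw [← LinearMap.ker_eq_bot, LinearMap.ker_eq_bot']
  intro r hr
  exact Ideal.Quotient.eq_zero_of_mul_mk_eq_zero_of_isRelPrime hXY (X_ne_zero _) (X_ne_zero _)
    (by simpa [phiMap, yR] using congrFun hr 0) (by simpa [phiMap, xR] using congrFun hr 1)

/-- The sequence `0 → R → R³ → Ω_{R/k} → 0` is exact, exhibiting a length-one free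
resolution of `Ω_{R/k}`; in particular `Ω_{R/k}` has projective dimension at most 1. -/
theorem kaehler_resolution_exact :
    Function.Injective (phiMap k) ∧ Function.Surjective (psiMap k) ∧
      LinearMap.ker (psiMap k) = LinearMap.range (phiMap k) := by
  rw [psiMap_eq_toKaehler, range_phiMap]
  exact ⟨phiMap_injective k, Hypersurface.toKaehler_surjective _, Hypersurface.ker_toKaehler _⟩
end
end

section
/- Let B = ℚ[f₁,f₂]/(f₁²,f₂²) and A = B[h]/(h² − (f₁+f₂)h + 2f₁f₂), a free B-module with basis {1,h}, and let π_* : A → B be the B-linear map with π_*(1) = 0 and π_*(h) = 1. Set ξ = 2h − f₁ − f₂ and p = (f₁+f₂)h − 2f₁f₂ in A. Then π_*((3 + 6p)·(1 + ξ/2 + ξ²/12)) = 3 + 6f₁ + 6f₂ − 6f₁f₂ in B. -/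
set_option synthInstance.maxHeartbeats 1000000
set_option maxHeartbeats 1000000

noncomputable section

/-- `B = ℚ[f₁,f₂]/(f₁²,f₂²)`, the Chow ring model of `ℙ¹×ℙ¹`. -/
abbrev Bring : Type := MvPolynomial (Fin 2) ℚ ⧸
  Ideal.span {(MvPolynomial.X 0 : MvPolynomial (Fin 2) ℚ) ^ 2, MvPolynomial.X 1 ^ 2}

/-- The class `f₁`. -/
def f₁ : Bring := Ideal.Quotient.mk _ (MvPolynomial.X 0)

/-- The class `f₂`. -/
def f₂ : Bring := Ideal.Quotient.mk _ (MvPolynomial.X 1)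

/-- `A = B[h]/(h² − (f₁+f₂)h + 2f₁f₂)`, the Chow ring model of the
projective bundle `ℙ(α^*Q)`. -/
abbrev Aring : Type := AdjoinRoot
  (Polynomial.X ^ 2 - Polynomial.C (f₁ + f₂) * Polynomial.X + Polynomial.C (2 * f₁ * f₂))

/-- The class `h = c₁(O(1))`. -/
def hA : Aring := AdjoinRoot.root _

/-- `ξ = 2h − f₁ − f₂`. -/
def ξA : Aring := 2 * hA - algebraMap Bring Aring (f₁ + f₂)

/-- `p = (f₁+f₂)h − 2f₁f₂`. -/
def pA : Aring := algebraMap Bring Aring (f₁ + f₂) * hA - algebraMap Bring Aring (2 * f₁ * f₂)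

lemma hf1 : f₁ ^ 2 = 0 := by
  have : f₁ ^ 2 = Ideal.Quotient.mk _ ((MvPolynomial.X 0 : MvPolynomial (Fin 2) ℚ) ^ 2) := by
    rw [f₁, map_pow]
  rw [this, Ideal.Quotient.eq_zero_iff_mem]
  exact Ideal.subset_span (by simp)

lemma hf2 : f₂ ^ 2 = 0 := by
  have : f₂ ^ 2 = Ideal.Quotient.mk _ ((MvPolynomial.X 1 : MvPolynomial (Fin 2) ℚ) ^ 2) := by
    rw [f₂, map_pow]
  rw [this, Ideal.Quotient.eq_zero_iff_mem]
  exact Ideal.subset_span (by simp)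

lemma mf1 : (algebraMap Bring Aring f₁) ^ 2 = 0 := by
  rw [← map_pow, hf1, map_zero]

lemma mf2 : (algebraMap Bring Aring f₂) ^ 2 = 0 := by
  rw [← map_pow, hf2, map_zero]

lemma hsq : hA ^ 2 = algebraMap Bring Aring (f₁ + f₂) * hA - algebraMap Bring Aring (2 * f₁ * f₂) := by
  have h := AdjoinRoot.eval₂_root
    (Polynomial.X ^ 2 - Polynomial.C (f₁ + f₂) * Polynomial.X + Polynomial.C (2 * f₁ * f₂))
  simp only [Polynomial.eval₂_add, Polynomial.eval₂_sub, Polynomial.eval₂_mul,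
    Polynomial.eval₂_pow, Polynomial.eval₂_X, Polynomial.eval₂_C] at h
  rw [AdjoinRoot.algebraMap_eq]
  rw [show hA = AdjoinRoot.root _ from rfl]
  linear_combination h

lemma hsq' : hA ^ 2 = (algebraMap Bring Aring f₁ + algebraMap Bring Aring f₂) * hA
    - 2 * (algebraMap Bring Aring f₁ * algebraMap Bring Aring f₂) := by
  have := hsq
  simp only [map_add, map_mul, map_ofNat] at this
  linear_combination this

lemma L1 : 3 + 6 * pA = algebraMap Bring Aring (3 - 12 * (f₁ * f₂))
    + algebraMap Bring Aring (6 * f₁ + 6 * f₂) * hA := by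
  unfold pA
  simp only [map_add, map_sub, map_mul, map_ofNat]
  ring

lemma xi_sq : ξA ^ 2 = algebraMap Bring Aring (-6 * (f₁ * f₂)) := by
  unfold ξA
  simp only [map_add, map_mul, map_neg, map_ofNat, neg_mul]
  linear_combination 4 * hsq' + mf1 + mf2

lemma L2 : (3 + 6 * pA) * ξA = algebraMap Bring Aring (-3 * f₁ - 3 * f₂)
    + algebraMap Bring Aring (6 - 12 * (f₁ * f₂)) * hA := by
  unfold pA ξA
  simp only [map_add, map_sub, map_mul, map_neg, map_ofNat, neg_mul]
  linear_combination (12 * (algebraMap Bring Aring f₁ + algebraMap Bring Aring f₂)) * hsq'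
    + (6 * hA - 12 * algebraMap Bring Aring f₂) * mf1
    + (6 * hA - 12 * algebraMap Bring Aring f₁) * mf2

lemma L3 : (3 + 6 * pA) * ξA ^ 2 = algebraMap Bring Aring (-18 * (f₁ * f₂)) := by
  rw [xi_sq]
  unfold pA
  simp only [map_add, map_sub, map_mul, map_neg, map_ofNat, neg_mul]
  linear_combination (72 * (algebraMap Bring Aring f₂) ^ 2 - 36 * algebraMap Bring Aring f₂ * hA) * mf1
    + (-36 * algebraMap Bring Aring f₁ * hA) * mf2

/-- GRR computation `ch(ind Rπ₁_* f₁^*E^*) = 3 + 6f₁ + 6f₂ − 6f₁f₂`: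
`π_*` is the `B`-linear map with `π_*(1) = 0`, `π_*(h) = 1`, and
`π_*((3 + 6p)(1 + ξ/2 + ξ²/12)) = 3 + 6f₁ + 6f₂ − 6f₁f₂`. -/
theorem grr_C1_E (π : Aring →ₗ[Bring] Bring) (hπ1 : π 1 = 0) (hπh : π hA = 1) :
    π ((3 + 6 * pA) * (1 + (2 : ℚ)⁻¹ • ξA + (12 : ℚ)⁻¹ • ξA ^ 2)) =
      3 + 6 * f₁ + 6 * f₂ - 6 * (f₁ * f₂) := by
  have π0 : ∀ b : Bring, π (algebraMap Bring Aring b) = 0 := fun b => by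
    rw [Algebra.algebraMap_eq_smul_one, map_smul, hπ1, smul_zero]
  have πh : ∀ b : Bring, π (algebraMap Bring Aring b * hA) = b := fun b => by
    rw [← Algebra.smul_def, map_smul, hπh, smul_eq_mul, mul_one]
  have πsmul : ∀ (q : ℚ) (y : Aring), π (q • y) = q • π y := fun q y => by
    rw [← algebraMap_smul Bring q y, map_smul, algebraMap_smul]
  have expand : (3 + 6 * pA) * (1 + (2 : ℚ)⁻¹ • ξA + (12 : ℚ)⁻¹ • ξA ^ 2)
      = (3 + 6 * pA) + (2 : ℚ)⁻¹ • ((3 + 6 * pA) * ξA)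
        + (12 : ℚ)⁻¹ • ((3 + 6 * pA) * ξA ^ 2) := by
    rw [mul_add, mul_add, mul_one, mul_smul_comm, mul_smul_comm]
  rw [expand, map_add, map_add, πsmul, πsmul, L2, L3, L1]
  simp only [π.map_add, π0, πh, smul_zero, zero_add, add_zero]
  have e2 : (algebraMap ℚ Bring (2:ℚ)⁻¹) * 2 = 1 := by
    rw [← map_ofNat (algebraMap ℚ Bring) 2, ← map_mul, inv_mul_cancel₀ (by norm_num), map_one]
  have hsm : ((2:ℚ)⁻¹ • ((6:Bring) - 12 * (f₁ * f₂))) = 3 - 6 * (f₁ * f₂) := by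
    rw [← algebraMap_smul Bring ((2:ℚ)⁻¹) ((6:Bring) - 12 * (f₁ * f₂)), smul_eq_mul]
    linear_combination (3 - 6 * (f₁ * f₂)) * e2
  rw [hsm]
  ring
end
end
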